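/- arXiv:1504.07234 — 3 statements merged into one kernel-verified Lean document; each statement's English description precedes it below -/
import Mathlib

section
/- Let K be a real m×s matrix, let g ∈ ℝ^m, let μ > 0, let P be a symmetric positive definite real m×m matrix, and let 0 < λ < 1/‖KᵀPK‖ (spectral norm). Define sequences by z⁰ = x⁰ = 0 and, for n ≥ 0, z^{n+1} = z^n + KᵀP(g − K x^n), x^{n+1} = λ·S_μ(z^{n+1}). Then the sequence (x^n) converges to the unique solution of the problem: minimize μ‖x‖₁ + (1/(2λ))‖x‖² over the set of minimizers of ‖Kx − g‖²_P := (Kx − g)ᵀP(Kx − g) in ℝ^s. -/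
/-!
Write `P = BᵀB`, `A = BK`, `b = Bg`; then `‖Kx - g‖²_P = ‖Ax - b‖²` and the iteration is
`z^{n+1} = z^n + Aᵀ(b - A x^n)`, `x^n = λ S_μ(z^n)`: gradient descent on the dual of the
regularized least-squares problem, with dual iterates `v^n` such that `z^n = Aᵀ v^n`.

A dual solution `u` exists: for a least-squares solution `x₀`, the dual objective
`λ/2 ‖S_μ t‖² - ⟨x₀, t⟩` is continuous and coercive on `range Aᵀ`, and at its minimizer `t = Aᵀu`
the gradient `λ S_μ(t) - x₀` is orthogonal to `range Aᵀ`, i.e. lies in `ker A`. So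
`x* = λ S_μ(Aᵀu)` is a least-squares solution, and `Aᵀu` is a subgradient at `x*` of the
`1/λ`-strongly convex `J = μ‖·‖₁ + ‖·‖²/(2λ)` that is orthogonal to `ker A`; hence
`J y ≥ J x* + ‖y - x*‖²/(2λ)` for every least-squares solution `y`.

Since `S_μ` is firmly nonexpansive, each step decreases `‖v^n - u‖²` by at least
`λ(2 - λ‖A‖²)‖S_μ z^n - S_μ(Aᵀu)‖²`; these terms are therefore summable, and `x^n → x*`.
-/

open Matrix Filter

/-- Soft-thresholding operator acting componentwise:
`S_μ(u)_i = sgn(u_i) · max(|u_i| − μ, 0)`. -/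
noncomputable def soft {s : ℕ} (μ : ℝ) (u : EuclideanSpace ℝ (Fin s)) : EuclideanSpace ℝ (Fin s) :=
  WithLp.toLp 2 (fun i => Real.sign (u i) * max (|u i| - μ) 0)

/-- Matrix-vector multiplication as a map between Euclidean spaces. -/
noncomputable def mulVecE {m n : ℕ} (A : Matrix (Fin m) (Fin n) ℝ)
    (v : EuclideanSpace ℝ (Fin n)) : EuclideanSpace ℝ (Fin m) :=
  WithLp.toLp 2 (A.mulVec v)

/-- The spectral norm of a real matrix: the operator norm induced by Euclidean vector norms. -/
noncomputable def specNorm {m n : ℕ} (A : Matrix (Fin m) (Fin n) ℝ) : ℝ :=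
  ‖(Matrix.toEuclideanLin A).toContinuousLinearMap‖

/-- The ℓ¹-norm of a vector. -/
noncomputable def l1norm {s : ℕ} (u : EuclideanSpace ℝ (Fin s)) : ℝ := ∑ i, |u i|


open scoped InnerProduct RealInnerProductSpace Topology

noncomputable def softThreshold (μ t : ℝ) : ℝ := Real.sign t * max (|t| - μ) 0

noncomputable def bregmanObjective {n : ℕ} (μ lam : ℝ) (y : EuclideanSpace ℝ (Fin n)) : ℝ :=
  μ * l1norm y + 1 / (2 * lam) * ‖y‖ ^ 2

section softThreshold

variable {μ : ℝ}

lemma softThreshold_eq (hμ : 0 ≤ μ) (t : ℝ) : softThreshold μ t = t - max (-μ) (min μ t) := by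
  rcases lt_trichotomy t 0 with h | rfl | h
  · rw [softThreshold, Real.sign_of_neg h, abs_of_neg h]
    simp only [max_def, min_def]; split_ifs <;> linarith
  · simp [softThreshold, hμ]
  · rw [softThreshold, Real.sign_of_pos h, abs_of_pos h]
    simp only [max_def, min_def]; split_ifs <;> linarith

lemma softThreshold_sub_sq_le_mul (hμ : 0 ≤ μ) (a b : ℝ) :
    (softThreshold μ a - softThreshold μ b) ^ 2 ≤
      (softThreshold μ a - softThreshold μ b) * (a - b) := by
  simp only [softThreshold_eq hμ, max_def, min_def]
  split_ifs <;> nlinarith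

lemma softThreshold_add_sq_le (hμ : 0 ≤ μ) (a h : ℝ) :
    softThreshold μ (a + h) ^ 2 ≤ softThreshold μ a ^ 2 + 2 * softThreshold μ a * h + h ^ 2 := by
  simp only [softThreshold_eq hμ, max_def, min_def]
  split_ifs <;> nlinarith

lemma sq_sub_le_softThreshold_sq (hμ : 0 ≤ μ) (t : ℝ) :
    t ^ 2 - 2 * μ * |t| ≤ softThreshold μ t ^ 2 := by
  rw [softThreshold_eq hμ, abs_eq_max_neg]
  simp only [max_def, min_def]
  split_ifs <;> nlinarith

lemma abs_sub_softThreshold_le (hμ : 0 ≤ μ) (t : ℝ) : |t - softThreshold μ t| ≤ μ := by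
  rw [softThreshold_eq hμ, sub_sub_cancel, abs_le]
  exact ⟨le_max_left _ _, max_le (by linarith) (min_le_left _ _)⟩

lemma sub_softThreshold_mul_softThreshold (hμ : 0 ≤ μ) (t : ℝ) :
    (t - softThreshold μ t) * softThreshold μ t = μ * |softThreshold μ t| := by
  rw [softThreshold_eq hμ, sub_sub_cancel, abs_eq_max_neg]
  simp only [max_def, min_def]
  split_ifs <;> nlinarith

lemma abs_mul_softThreshold_add_le (hμ : 0 ≤ μ) {c : ℝ} (hc : 0 ≤ c) (t y : ℝ) :
    μ * |c * softThreshold μ t| + (t - softThreshold μ t) * (y - c * softThreshold μ t) ≤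
      μ * |y| := by
  have hy : (t - softThreshold μ t) * y ≤ μ * |y| :=
    calc _ ≤ |t - softThreshold μ t| * |y| := by rw [← abs_mul]; exact le_abs_self _
      _ ≤ μ * |y| := by gcongr; exact abs_sub_softThreshold_le hμ t
  rw [abs_mul, abs_of_nonneg hc]
  linear_combination hy - c * sub_softThreshold_mul_softThreshold hμ t

end softThreshold

section soft

variable {n : ℕ} {μ : ℝ}

lemma soft_apply (μ : ℝ) (u : EuclideanSpace ℝ (Fin n)) (i : Fin n) :
    soft μ u i = softThreshold μ (u i) := rfl

@[simp] lemma soft_zero (μ : ℝ) : soft μ (0 : EuclideanSpace ℝ (Fin n)) = 0 := by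
  ext i; simp [soft_apply, softThreshold]

lemma continuous_soft (hμ : 0 ≤ μ) : Continuous (soft (s := n) μ) := by
  have : soft (s := n) μ = fun u => WithLp.toLp 2 fun i => u i - max (-μ) (min μ (u i)) := by
    ext u i; exact softThreshold_eq hμ (u i)
  rw [this]; fun_prop

lemma norm_soft_sub_sq_le_inner (hμ : 0 ≤ μ) (u v : EuclideanSpace ℝ (Fin n)) :
    ‖soft μ u - soft μ v‖ ^ 2 ≤ ⟪soft μ u - soft μ v, u - v⟫ := by
  simp only [EuclideanSpace.real_norm_sq_eq, PiLp.inner_apply, Real.inner_apply, PiLp.sub_apply,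
    soft_apply]
  exact Finset.sum_le_sum fun i _ => softThreshold_sub_sq_le_mul hμ (u i) (v i)

lemma norm_soft_add_sq_le (hμ : 0 ≤ μ) (t h : EuclideanSpace ℝ (Fin n)) :
    ‖soft μ (t + h)‖ ^ 2 ≤ ‖soft μ t‖ ^ 2 + 2 * ⟪soft μ t, h⟫ + ‖h‖ ^ 2 := by
  simp only [EuclideanSpace.real_norm_sq_eq, PiLp.inner_apply, Real.inner_apply, PiLp.add_apply,
    soft_apply, Finset.mul_sum, ← Finset.sum_add_distrib]
  exact Finset.sum_le_sum fun i _ => by linarith [softThreshold_add_sq_le hμ (t i) (h i)]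

lemma l1norm_le_mul_norm (t : EuclideanSpace ℝ (Fin n)) : l1norm t ≤ n * ‖t‖ :=
  calc l1norm t ≤ ∑ _i : Fin n, ‖t‖ := Finset.sum_le_sum fun i _ => PiLp.norm_apply_le t i
    _ = n * ‖t‖ := by simp

lemma norm_sq_sub_le_norm_soft_sq (hμ : 0 ≤ μ) (t : EuclideanSpace ℝ (Fin n)) :
    ‖t‖ ^ 2 - 2 * μ * n * ‖t‖ ≤ ‖soft μ t‖ ^ 2 := by
  have h : ‖t‖ ^ 2 - 2 * μ * l1norm t ≤ ‖soft μ t‖ ^ 2 := by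
    simp only [EuclideanSpace.real_norm_sq_eq, l1norm, soft_apply, Finset.mul_sum,
      ← Finset.sum_sub_distrib]
    exact Finset.sum_le_sum fun i _ => sq_sub_le_softThreshold_sq hμ (t i)
  nlinarith [l1norm_le_mul_norm t]

lemma l1norm_smul_soft_add_inner_le (hμ : 0 ≤ μ) {c : ℝ} (hc : 0 ≤ c)
    (t y : EuclideanSpace ℝ (Fin n)) :
    μ * l1norm (c • soft μ t) + ⟪t - soft μ t, y - c • soft μ t⟫ ≤ μ * l1norm y := by
  simp only [l1norm, PiLp.inner_apply, Real.inner_apply, PiLp.sub_apply, PiLp.smul_apply,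
    smul_eq_mul, soft_apply, Finset.mul_sum, ← Finset.sum_add_distrib]
  exact Finset.sum_le_sum fun i _ => abs_mul_softThreshold_add_le hμ hc (t i) (y i)

lemma bregmanObjective_add_inner_add_le (hμ : 0 ≤ μ) {lam : ℝ} (hlam : 0 < lam)
    (t y : EuclideanSpace ℝ (Fin n)) :
    bregmanObjective μ lam (lam • soft μ t) + ⟪t, y - lam • soft μ t⟫ +
        1 / (2 * lam) * ‖y - lam • soft μ t‖ ^ 2 ≤ bregmanObjective μ lam y := by
  set x := lam • soft μ t
  have hl1 := l1norm_smul_soft_add_inner_le hμ hlam.le t y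
  have hsq : ‖y‖ ^ 2 = ‖x‖ ^ 2 + 2 * lam * ⟪soft μ t, y - x⟫ + ‖y - x‖ ^ 2 := by
    rw [mul_assoc, ← real_inner_smul_left, ← norm_add_sq_real, add_sub_cancel]
  rw [inner_sub_left] at hl1
  rw [bregmanObjective, bregmanObjective, hsq]
  field_simp
  nlinarith

end soft

lemma tendsto_quadratic_atTop {a : ℝ} (ha : 0 < a) (c : ℝ) :
    Tendsto (fun r : ℝ => a * r ^ 2 - c * r) atTop atTop := by
  have : Tendsto (fun r : ℝ => r * (a * r - c)) atTop atTop :=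
    tendsto_id.atTop_mul_atTop₀
      (tendsto_atTop_add_const_right _ (-c) (tendsto_id.const_mul_atTop ha))
  exact this.congr fun r => by ring

lemma summable_of_succ_add_le {a c : ℕ → ℝ} (ha : ∀ n, 0 ≤ a n) (hc : ∀ n, 0 ≤ c n)
    (h : ∀ n, a (n + 1) + c n ≤ a n) : Summable c := by
  have hsum (n : ℕ) : ∑ k ∈ Finset.range n, c k + a n ≤ a 0 := by
    induction n with
    | zero => simp
    | succ n ih => rw [Finset.sum_range_succ]; linarith [h n]
  exact summable_of_sum_range_le hc fun n => by linarith [hsum n, ha n]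

lemma forall_le_and_eq_of_add_norm_sq_le {E : Type*} [NormedAddCommGroup E] {S : Set E}
    {J : E → ℝ} {x : E} {c : ℝ} (hc : 0 < c) (hx : x ∈ S)
    (h : ∀ y ∈ S, J x + c * ‖y - x‖ ^ 2 ≤ J y) :
    (∀ y ∈ S, J x ≤ J y) ∧ ∀ y ∈ S, (∀ w ∈ S, J y ≤ J w) → y = x := by
  refine ⟨fun y hy => by nlinarith [h y hy, sq_nonneg ‖y - x‖], fun y hy hmin => ?_⟩
  have hsq : c * ‖y - x‖ ^ 2 ≤ 0 := by linarith [h y hy, hmin x hx]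
  have h0 : ‖y - x‖ ^ 2 = 0 :=
    le_antisymm (le_of_mul_le_mul_left (by rwa [mul_zero]) hc) (sq_nonneg _)
  simpa [sub_eq_zero] using h0

section Hilbert

variable {E F : Type*} [NormedAddCommGroup E] [InnerProductSpace ℝ E]
  [NormedAddCommGroup F] [InnerProductSpace ℝ F]

lemma mem_orthogonal_of_le_add_inner_add_sq (V : Submodule ℝ E) {f : E → ℝ} {x g : E} {c : ℝ}
    (hmin : ∀ v ∈ V, f x ≤ f (x + v)) (hf : ∀ h, f (x + h) ≤ f x + ⟪g, h⟫ + c * ‖h‖ ^ 2) :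
    g ∈ Vᗮ := by
  rw [Submodule.mem_orthogonal]
  intro w hw
  have hquad (τ : ℝ) : 0 ≤ (c * ‖w‖ ^ 2) * (τ * τ) + ⟪w, g⟫ * τ + 0 := by
    have h1 := hmin (τ • w) (V.smul_mem τ hw)
    have h2 := hf (τ • w)
    rw [inner_smul_right, norm_smul, Real.norm_eq_abs, mul_pow, sq_abs, real_inner_comm] at h2
    nlinarith
  have := discrim_le_zero hquad
  rw [discrim] at this
  nlinarith [sq_nonneg ⟪w, g⟫]

lemma exists_adjoint_apply_sub_eq_zero [FiniteDimensional ℝ E] [CompleteSpace F]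
    (A : E →L[ℝ] F) (b : F) : ∃ x, (A†) (A x - b) = 0 := by
  let R := LinearMap.range (A : E →ₗ[ℝ] F)
  obtain ⟨x, hx⟩ : R.starProjection b ∈ R := R.starProjection_apply_mem b
  refine ⟨x, ?_⟩
  have hperp : b - R.starProjection b ∈ Rᗮ := R.sub_starProjection_mem_orthogonal b
  rw [← hx, ContinuousLinearMap.orthogonal_range] at hperp
  rw [← neg_sub, map_neg, neg_eq_zero]
  exact hperp

variable [CompleteSpace E] [CompleteSpace F]

lemma norm_apply_sub_sq_eq (A : E →L[ℝ] F) (b : F) {x : E} (hx : (A†) (A x - b) = 0) (y : E) :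
    ‖A y - b‖ ^ 2 = ‖A x - b‖ ^ 2 + ‖A (y - x)‖ ^ 2 := by
  have horth : ⟪A x - b, A (y - x)⟫ = 0 := by
    rw [← ContinuousLinearMap.adjoint_inner_left, hx, inner_zero_left]
  have hsplit : A y - b = (A x - b) + A (y - x) := by rw [map_sub]; abel
  rw [hsplit, norm_add_sq_real, horth, mul_zero, add_zero]

def leastSquaresSolutions (A : E →L[ℝ] F) (b : F) : Set E :=
  {y | ∀ w, ‖A y - b‖ ^ 2 ≤ ‖A w - b‖ ^ 2}

lemma mem_leastSquaresSolutions_iff {A : E →L[ℝ] F} {b : F} {x : E} (hx : (A†) (A x - b) = 0)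
    {y : E} : y ∈ leastSquaresSolutions A b ↔ A y = A x := by
  have hpyth := norm_apply_sub_sq_eq A b hx
  refine ⟨fun hy => ?_, fun hy w => ?_⟩
  · have h := hy x
    rw [hpyth y] at h
    rw [← sub_eq_zero, ← map_sub, ← norm_eq_zero, ← sq_eq_zero_iff]
    linarith [sq_nonneg ‖A (y - x)‖]
  · rw [hpyth y, hpyth w, map_sub, hy, sub_self, norm_zero]
    linarith [sq_nonneg ‖A (w - x)‖]

lemma norm_sub_apply_sq_add_le {T : E → E}
    (hT : ∀ a b, ‖T a - T b‖ ^ 2 ≤ ⟪T a - T b, a - b⟫) (A : E →L[ℝ] F) {lam : ℝ} (hlam : 0 ≤ lam)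
    {e : F} {z t : E} (he : (A†) e = z - t) :
    ‖e - A (lam • (T z - T t))‖ ^ 2 + lam * (2 - lam * ‖A‖ ^ 2) * ‖T z - T t‖ ^ 2 ≤
      ‖e‖ ^ 2 := by
  set d := T z - T t
  have hinner : ⟪e, A (lam • d)⟫ = lam * ⟪d, z - t⟫ := by
    rw [← ContinuousLinearMap.adjoint_inner_left, he, real_inner_smul_right, real_inner_comm]
  have hnorm : ‖A (lam • d)‖ ≤ ‖A‖ * (lam * ‖d‖) := by
    simpa [norm_smul, abs_of_nonneg hlam] using A.le_opNorm (lam • d)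
  have hsq : ‖A (lam • d)‖ ^ 2 ≤ lam ^ 2 * ‖A‖ ^ 2 * ‖d‖ ^ 2 := by
    nlinarith [norm_nonneg (A (lam • d))]
  rw [norm_sub_sq_real, hinner]
  nlinarith [mul_le_mul_of_nonneg_left (hT z t) hlam]

theorem tendsto_linearizedBregman {T : E → E}
    (hT : ∀ a b, ‖T a - T b‖ ^ 2 ≤ ⟪T a - T b, a - b⟫) (A : E →L[ℝ] F) (b : F) {lam : ℝ}
    (hlam : 0 < lam) (hlamA : lam * ‖A‖ ^ 2 < 2) {u : F}
    (hu : (A†) (A (lam • T ((A†) u)) - b) = 0) {z : ℕ → E} (hz0 : z 0 = 0)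
    (hz : ∀ n, z (n + 1) = z n + (A†) (b - A (lam • T (z n)))) :
    Tendsto (fun n => lam • T (z n)) atTop (𝓝 (lam • T ((A†) u))) := by
  set t := (A†) u
  -- the dual iterates, shifted by the dual solution `u`
  set e : ℕ → F := fun n => A (∑ k ∈ Finset.range n, (lam • T t - lam • T (z k))) - u
  have he_succ (n : ℕ) : e (n + 1) = e n - A (lam • (T (z n) - T t)) := by
    simp only [e, Finset.sum_range_succ, map_add, smul_sub, map_sub]
    abel
  have he (n : ℕ) : (A†) (e n) = z n - t := by
    induction n with
    | zero => simp [e, hz0, t]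
    | succ n ih =>
      rw [he_succ, map_sub, ih, hz]
      simp only [map_sub, map_smul] at hu ⊢
      linear_combination (norm := module) hu
  have hκ : 0 < lam * (2 - lam * ‖A‖ ^ 2) := mul_pos hlam (by linarith)
  have hsum : Summable fun n => lam * (2 - lam * ‖A‖ ^ 2) * ‖T (z n) - T t‖ ^ 2 :=
    summable_of_succ_add_le (fun n => sq_nonneg ‖e n‖) (fun n => by positivity) fun n => by
      simpa only [he_succ] using norm_sub_apply_sq_add_le hT A hlam.le (he n)
  have hsq : Tendsto (fun n => ‖T (z n) - T t‖ ^ 2) atTop (𝓝 0) := by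
    have := hsum.tendsto_atTop_zero.const_mul (lam * (2 - lam * ‖A‖ ^ 2))⁻¹
    rw [mul_zero] at this
    exact this.congr fun n => inv_mul_cancel_left₀ hκ.ne' _
  have hnorm : Tendsto (fun n => ‖T (z n) - T t‖) atTop (𝓝 0) := by
    simpa [Real.sqrt_sq (norm_nonneg _)] using hsq.sqrt
  exact (tendsto_iff_norm_sub_tendsto_zero.mpr hnorm).const_smul lam

end Hilbert

section Dual

variable {F : Type*} [NormedAddCommGroup F] [InnerProductSpace ℝ F] [CompleteSpace F]
  {n : ℕ} {μ lam : ℝ}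

lemma exists_adjoint_apply_smul_soft_sub_eq_zero (hμ : 0 ≤ μ) (hlam : 0 < lam)
    (A : EuclideanSpace ℝ (Fin n) →L[ℝ] F) (b : F) :
    ∃ u, (A†) (A (lam • soft μ ((A†) u)) - b) = 0 := by
  obtain ⟨x₀, hx₀⟩ := exists_adjoint_apply_sub_eq_zero A b
  set W := (A†).range
  set D : EuclideanSpace ℝ (Fin n) → ℝ := fun t => lam / 2 * ‖soft μ t‖ ^ 2 - ⟪x₀, t⟫
  have hD_cont : Continuous D := by
    have := continuous_soft (n := n) hμ
    fun_prop
  have hD_lower (t) : lam / 2 * ‖t‖ ^ 2 - (lam * μ * n + ‖x₀‖) * ‖t‖ ≤ D t := by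
    have := mul_le_mul_of_nonneg_left (norm_sq_sub_le_norm_soft_sq hμ t) (half_pos hlam).le
    have := real_inner_le_norm x₀ t
    simp only [D]
    linarith
  have hD_coercive : Tendsto (fun t : W => D t) (cocompact W) atTop :=
    tendsto_atTop_mono (fun t => hD_lower t)
      ((tendsto_quadratic_atTop (half_pos hlam) _).comp tendsto_norm_cocompact_atTop)
  obtain ⟨⟨t, ht⟩, hmin⟩ := (hD_cont.comp continuous_subtype_val).exists_forall_le hD_coercive
  have horth : lam • soft μ t - x₀ ∈ Wᗮ := by
    refine mem_orthogonal_of_le_add_inner_add_sq W (f := D) (c := lam / 2)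
      (fun v hv => hmin ⟨t + v, W.add_mem ht hv⟩) fun h => ?_
    have := norm_soft_add_sq_le hμ t h
    simp only [D, inner_sub_left, real_inner_smul_left, inner_add_right]
    nlinarith
  rw [ContinuousLinearMap.orthogonal_range, ContinuousLinearMap.adjoint_adjoint,
    LinearMap.mem_ker, map_sub, sub_eq_zero] at horth
  obtain ⟨u, rfl⟩ := ht
  exact ⟨u, by rw [← hx₀]; congr 2⟩

theorem mem_leastSquaresSolutions_and_bregmanObjective_add_le (hμ : 0 ≤ μ) (hlam : 0 < lam)
    (A : EuclideanSpace ℝ (Fin n) →L[ℝ] F) (b : F) {u : F}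
    (hu : (A†) (A (lam • soft μ ((A†) u)) - b) = 0) :
    lam • soft μ ((A†) u) ∈ leastSquaresSolutions A b ∧
      ∀ y ∈ leastSquaresSolutions A b,
        bregmanObjective μ lam (lam • soft μ ((A†) u)) +
            1 / (2 * lam) * ‖y - lam • soft μ ((A†) u)‖ ^ 2 ≤ bregmanObjective μ lam y := by
  refine ⟨(mem_leastSquaresSolutions_iff hu).mpr rfl, fun y hy => ?_⟩
  have horth : ⟪(A†) u, y - lam • soft μ ((A†) u)⟫ = 0 := by
    rw [ContinuousLinearMap.adjoint_inner_left, map_sub, (mem_leastSquaresSolutions_iff hu).mp hy,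
      sub_self, inner_zero_right]
  simpa [horth] using bregmanObjective_add_inner_add_le hμ hlam ((A†) u) y

end Dual

section Matrix

variable {l m n : ℕ}

noncomputable def euclideanCLM (M : Matrix (Fin m) (Fin n) ℝ) :
    EuclideanSpace ℝ (Fin n) →L[ℝ] EuclideanSpace ℝ (Fin m) :=
  (Matrix.toEuclideanLin M).toContinuousLinearMap

lemma euclideanCLM_apply (M : Matrix (Fin m) (Fin n) ℝ) (v : EuclideanSpace ℝ (Fin n)) :
    euclideanCLM M v = mulVecE M v := rfl

lemma euclideanCLM_mul (M : Matrix (Fin l) (Fin m) ℝ) (N : Matrix (Fin m) (Fin n) ℝ) :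
    euclideanCLM (M * N) = euclideanCLM M ∘L euclideanCLM N := by
  ext v : 1
  simp [euclideanCLM_apply, mulVecE, Matrix.mulVec_mulVec]

lemma adjoint_euclideanCLM (M : Matrix (Fin m) (Fin n) ℝ) :
    (euclideanCLM M)† = euclideanCLM Mᵀ := by
  rw [euclideanCLM, euclideanCLM, ← LinearMap.adjoint_toContinuousLinearMap,
    ← Matrix.toEuclideanLin_conjTranspose_eq_adjoint, Matrix.conjTranspose_eq_transpose_of_trivial]

lemma specNorm_transpose_mul_self (M : Matrix (Fin m) (Fin n) ℝ) :
    specNorm (Mᵀ * M) = ‖euclideanCLM M‖ ^ 2 := by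
  rw [sq, ← ContinuousLinearMap.norm_adjoint_comp_self, adjoint_euclideanCLM, ← euclideanCLM_mul]
  rfl

lemma dotProduct_star_mul_self_mulVec (B : Matrix (Fin n) (Fin n) ℝ)
    (w : EuclideanSpace ℝ (Fin n)) : dotProduct w ((star B * B).mulVec w) = ‖mulVecE B w‖ ^ 2 := by
  rw [← Matrix.mulVec_mulVec, Matrix.dotProduct_mulVec, Matrix.star_eq_conjTranspose,
    Matrix.conjTranspose_eq_transpose_of_trivial, Matrix.vecMul_transpose, mulVecE,
    EuclideanSpace.real_norm_sq_eq]
  simp [dotProduct, sq]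

lemma dotProduct_sub_mulVec_sub_eq_norm_sq (B : Matrix (Fin m) (Fin m) ℝ)
    (K : Matrix (Fin m) (Fin n) ℝ) (g : EuclideanSpace ℝ (Fin m)) (y : EuclideanSpace ℝ (Fin n)) :
    dotProduct (mulVecE K y - g) ((star B * B).mulVec (mulVecE K y - g)) =
      ‖euclideanCLM (B * K) y - mulVecE B g‖ ^ 2 := by
  rw [← WithLp.ofLp_sub (x := mulVecE K y) (y := g), dotProduct_star_mul_self_mulVec]
  simp only [← euclideanCLM_apply, map_sub, euclideanCLM_mul, ContinuousLinearMap.comp_apply]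

lemma transpose_mul_star_mul_self (B : Matrix (Fin m) (Fin m) ℝ) (K : Matrix (Fin m) (Fin n) ℝ) :
    Kᵀ * (star B * B) = (B * K)ᵀ * B := by
  rw [Matrix.transpose_mul, Matrix.star_eq_conjTranspose,
    Matrix.conjTranspose_eq_transpose_of_trivial, Matrix.mul_assoc]

lemma mulVecE_transpose_mul_star_mul_self_sub (B : Matrix (Fin m) (Fin m) ℝ)
    (K : Matrix (Fin m) (Fin n) ℝ) (g : EuclideanSpace ℝ (Fin m)) (x : EuclideanSpace ℝ (Fin n)) :
    mulVecE (Kᵀ * (star B * B)) (g - mulVecE K x) =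
      ((euclideanCLM (B * K))†) (mulVecE B g - euclideanCLM (B * K) x) := by
  rw [transpose_mul_star_mul_self, adjoint_euclideanCLM]
  simp only [← euclideanCLM_apply, euclideanCLM_mul, map_sub, ContinuousLinearMap.comp_apply]

lemma specNorm_transpose_mul_star_mul_self_mul (B : Matrix (Fin m) (Fin m) ℝ)
    (K : Matrix (Fin m) (Fin n) ℝ) :
    specNorm (Kᵀ * (star B * B) * K) = ‖euclideanCLM (B * K)‖ ^ 2 := by
  rw [transpose_mul_star_mul_self, Matrix.mul_assoc, specNorm_transpose_mul_self]

end Matrix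

/-- Convergence of the modified linearized Bregman algorithm (MLBA) with a symmetric
positive definite preconditioner `P` and `0 < λ < 1/‖KᵀPK‖`: the iterates `x^n` converge
to the unique minimizer of `μ‖x‖₁ + (1/(2λ))‖x‖²` over the set of minimizers
of `‖Kx − g‖²_P = (Kx − g)ᵀP(Kx − g)`. -/
theorem stmt1 {m s : ℕ}
    (K : Matrix (Fin m) (Fin s) ℝ) (g : EuclideanSpace ℝ (Fin m))
    (μ lam : ℝ) (hμ : 0 < μ)
    (P : Matrix (Fin m) (Fin m) ℝ) (hP : P.PosDef)
    (hlam0 : 0 < lam) (hlam1 : lam < 1 / specNorm (Kᵀ * P * K))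
    (z x : ℕ → EuclideanSpace ℝ (Fin s))
    (hz0 : z 0 = 0) (hx0 : x 0 = 0)
    (hz : ∀ n, z (n + 1) = z n + mulVecE (Kᵀ * P) (g - mulVecE K (x n)))
    (hx : ∀ n, x (n + 1) = lam • soft μ (z (n + 1))) :
    ∃ xstar : EuclideanSpace ℝ (Fin s),
      (∀ y, dotProduct (mulVecE K xstar - g) (P.mulVec (mulVecE K xstar - g)) ≤
            dotProduct (mulVecE K y - g) (P.mulVec (mulVecE K y - g))) ∧
      (∀ y, (∀ w, dotProduct (mulVecE K y - g) (P.mulVec (mulVecE K y - g)) ≤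
                  dotProduct (mulVecE K w - g) (P.mulVec (mulVecE K w - g))) →
        μ * l1norm xstar + (1 / (2 * lam)) * ‖xstar‖ ^ 2 ≤
          μ * l1norm y + (1 / (2 * lam)) * ‖y‖ ^ 2) ∧
      (∀ y, (∀ w, dotProduct (mulVecE K y - g) (P.mulVec (mulVecE K y - g)) ≤
                  dotProduct (mulVecE K w - g) (P.mulVec (mulVecE K w - g))) →
        (∀ w, (∀ v, dotProduct (mulVecE K w - g) (P.mulVec (mulVecE K w - g)) ≤
                    dotProduct (mulVecE K v - g) (P.mulVec (mulVecE K v - g))) →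
          μ * l1norm y + (1 / (2 * lam)) * ‖y‖ ^ 2 ≤
            μ * l1norm w + (1 / (2 * lam)) * ‖w‖ ^ 2) →
        y = xstar) ∧
      Tendsto x atTop (nhds xstar) := by
  -- `P = BᵀB` turns the `P`-weighted problem into plain least squares for `A = BK`, `b = Bg`
  obtain ⟨B, rfl⟩ : ∃ B, P = star B * B := by
    open scoped MatrixOrder in exact CStarAlgebra.nonneg_iff_eq_star_mul_self.mp hP.posSemidef.nonneg
  set A := euclideanCLM (B * K)
  set b := mulVecE B g
  have hlamA : lam * ‖A‖ ^ 2 < 2 := by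
    rw [specNorm_transpose_mul_star_mul_self_mul] at hlam1
    rcases (sq_nonneg ‖A‖).eq_or_lt with h0 | hpos
    · rw [← h0, div_zero] at hlam1; linarith
    · rw [lt_div_iff₀ hpos] at hlam1; linarith
  have hxz : x = fun n => lam • soft μ (z n) := funext fun n => by
    cases n with
    | zero => simp [hx0, hz0]
    | succ n => exact hx n
  have hz' (n : ℕ) : z (n + 1) = z n + (A†) (b - A (lam • soft μ (z n))) := by
    rw [hz, mulVecE_transpose_mul_star_mul_self_sub, hxz]
  obtain ⟨u, hu⟩ := exists_adjoint_apply_smul_soft_sub_eq_zero hμ.le hlam0 A b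
  obtain ⟨hmem, hgrowth⟩ :=
    mem_leastSquaresSolutions_and_bregmanObjective_add_le hμ.le hlam0 A b hu
  obtain ⟨hle, huniq⟩ := forall_le_and_eq_of_add_norm_sq_le (c := 1 / (2 * lam)) (by positivity)
    hmem hgrowth
  simp only [dotProduct_sub_mulVec_sub_eq_norm_sq]
  refine ⟨_, hmem, hle, huniq, ?_⟩
  rw [hxz]
  exact tendsto_linearizedBregman (norm_soft_sub_sq_le_inner hμ.le) A b hlam0 hlamA hu hz0 hz'
end

section
/- Let C be a nonzero real N×N matrix, r ∈ ℝ^N with r ≠ 0, and 0 < q < 1. If α > 0 satisfies α‖(CCᵀ + αI)⁻¹r‖ = q‖r‖, then α ≤ q‖C‖²/(1 − q) and ‖(CCᵀ + αI)⁻¹r‖ = (q/α)‖r‖ ≥ ((1 − q)/‖C‖²)·‖r‖. -/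
open Matrix Filter

/-! The operator norm of `CCᵀ + αI` is at most `‖C‖² + α`, so with `x = (CCᵀ + αI)⁻¹ r` we get
`‖r‖ ≤ (‖C‖² + α)‖x‖ = (‖C‖² + α) q‖r‖ / α`. Cancelling `‖r‖` leaves `α(1 − q) ≤ q‖C‖²`, which is
both inequalities at once. -/

section
open scoped Matrix.Norms.L2Operator

variable {m n : Type*} [Fintype m] [Fintype n] [DecidableEq m]

lemma Matrix.posDef_mul_transpose_add_smul_one (C : Matrix m n ℝ) {α : ℝ} (hα : 0 < α) :
    (C * Cᵀ + α • (1 : Matrix m m ℝ)).PosDef := by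
  refine PosDef.posSemidef_add ?_ ?_
  · simpa using C.posSemidef_self_mul_conjTranspose
  · rw [smul_one_eq_diagonal]
    exact PosDef.diagonal fun _ => hα

lemma Matrix.l2_opNorm_smul_one_le (α : ℝ) : ‖α • (1 : Matrix m m ℝ)‖ ≤ |α| := by
  rw [smul_one_eq_diagonal, l2_opNorm_diagonal, ← Real.norm_eq_abs]
  exact pi_norm_const_le α

lemma Matrix.l2_opNorm_mul_transpose_self [DecidableEq n] (C : Matrix m n ℝ) :
    ‖C * Cᵀ‖ = ‖C‖ ^ 2 := by
  have h := l2_opNorm_conjTranspose_mul_self Cᴴ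
  rw [conjTranspose_conjTranspose, l2_opNorm_conjTranspose] at h
  simpa [sq] using h

lemma Matrix.l2_opNorm_mul_transpose_add_smul_one_le [DecidableEq n] (C : Matrix m n ℝ) {α : ℝ}
    (hα : 0 ≤ α) :
    ‖C * Cᵀ + α • (1 : Matrix m m ℝ)‖ ≤ ‖C‖ ^ 2 + α :=
  calc ‖C * Cᵀ + α • (1 : Matrix m m ℝ)‖ ≤ ‖C * Cᵀ‖ + ‖α • (1 : Matrix m m ℝ)‖ := norm_add_le _ _
    _ ≤ ‖C‖ ^ 2 + α := by
      rw [l2_opNorm_mul_transpose_self]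
      grw [l2_opNorm_smul_one_le, abs_of_nonneg hα]

lemma Matrix.norm_le_l2_opNorm_mul_norm_inv_mulVec {M : Matrix m m ℝ} (hM : IsUnit M.det)
    (r : EuclideanSpace ℝ m) : ‖r‖ ≤ ‖M‖ * ‖WithLp.toLp 2 (M⁻¹ *ᵥ r)‖ := by
  simpa [mulVec_mulVec, mul_nonsing_inv M hM] using
    l2_opNorm_mulVec M (WithLp.toLp 2 (M⁻¹ *ᵥ r))

lemma Matrix.norm_le_mul_norm_inv_mul_transpose_add_smul_one_mulVec [DecidableEq n]
    (C : Matrix m n ℝ) {α : ℝ} (hα : 0 < α) (r : EuclideanSpace ℝ m) :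
    ‖r‖ ≤ (‖C‖ ^ 2 + α) * ‖WithLp.toLp 2 ((C * Cᵀ + α • (1 : Matrix m m ℝ))⁻¹ *ᵥ r)‖ := by
  have hdet := (C.posDef_mul_transpose_add_smul_one hα).isUnit.map detMonoidHom
  grw [norm_le_l2_opNorm_mul_norm_inv_mulVec hdet r,
    l2_opNorm_mul_transpose_add_smul_one_le C hα.le]

end

theorem stmt9_general {N : ℕ} (C : Matrix (Fin N) (Fin N) ℝ)
    (r : EuclideanSpace ℝ (Fin N)) (hr : r ≠ 0)
    (q : ℝ) (hq1 : q < 1)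
    (α : ℝ) (hα : 0 < α)
    (hαeq : α * ‖mulVecE (C * Cᵀ + α • (1 : Matrix (Fin N) (Fin N) ℝ))⁻¹ r‖ = q * ‖r‖) :
    α ≤ q * specNorm C ^ 2 / (1 - q) ∧
    ‖mulVecE (C * Cᵀ + α • (1 : Matrix (Fin N) (Fin N) ℝ))⁻¹ r‖ = (q / α) * ‖r‖ ∧
    (q / α) * ‖r‖ ≥ ((1 - q) / specNorm C ^ 2) * ‖r‖ := by
  open scoped Matrix.Norms.L2Operator in
  have hspec : specNorm C = ‖C‖ := rfl
  set x := mulVecE (C * Cᵀ + α • (1 : Matrix (Fin N) (Fin N) ℝ))⁻¹ r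
  have hx : ‖x‖ = q / α * ‖r‖ := by field_simp; linarith
  have hrpos : 0 < ‖r‖ := norm_pos_iff.mpr hr
  have hbound : ‖r‖ ≤ (‖C‖ ^ 2 + α) * ‖x‖ :=
    C.norm_le_mul_norm_inv_mul_transpose_add_smul_one_mulVec hα r
  have hkey : α * (1 - q) ≤ q * ‖C‖ ^ 2 := by
    have h : α * ‖r‖ ≤ (‖C‖ ^ 2 + α) * q * ‖r‖ :=
      calc α * ‖r‖ ≤ α * ((‖C‖ ^ 2 + α) * ‖x‖) := by gcongr
        _ = (‖C‖ ^ 2 + α) * q * ‖r‖ := by rw [hx]; field_simp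
    nlinarith [le_of_mul_le_mul_right h hrpos]
  have hCpos : 0 < ‖C‖ ^ 2 := by nlinarith
  refine ⟨?_, hx, ?_⟩
  · rw [hspec, le_div_iff₀ (sub_pos.2 hq1)]
    linarith
  · rw [hspec, ge_iff_le]
    gcongr ?_ * _
    rw [div_le_div_iff₀ hCpos hα]
    linarith

/-- If `α > 0` satisfies `α‖(CCᵀ + αI)⁻¹r‖ = q‖r‖`, then `α ≤ q‖C‖²/(1 − q)` and
`‖(CCᵀ + αI)⁻¹r‖ = (q/α)‖r‖ ≥ ((1 − q)/‖C‖²)‖r‖`. -/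
theorem stmt9 {N : ℕ} (C : Matrix (Fin N) (Fin N) ℝ) (hC : C ≠ 0)
    (r : EuclideanSpace ℝ (Fin N)) (hr : r ≠ 0)
    (q : ℝ) (hq0 : 0 < q) (hq1 : q < 1)
    (α : ℝ) (hα : 0 < α)
    (hαeq : α * ‖mulVecE (C * Cᵀ + α • (1 : Matrix (Fin N) (Fin N) ℝ))⁻¹ r‖ = q * ‖r‖) :
    α ≤ q * specNorm C ^ 2 / (1 - q) ∧
    ‖mulVecE (C * Cᵀ + α • (1 : Matrix (Fin N) (Fin N) ℝ))⁻¹ r‖ = (q / α) * ‖r‖ ∧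
    (q / α) * ‖r‖ ≥ ((1 - q) / specNorm C ^ 2) * ‖r‖ :=
  stmt9_general C r hr q hq1 α hα hαeq
end

section
/- Under the standing assumptions, fix q ∈ (2ρ, 1), a starting vector z⁰ ∈ ℝ^s, and assume C ≠ 0 and δ > 0. There do NOT exist infinite sequences (z^n)_{n≥0}, (r^n)_{n≥0}, (α_n)_{n≥0} such that for every n ≥ 0: r^n = g^δ − K·S_μ(z^n), ‖r^n‖ > τδ, α_n > 0 with α_n‖(CCᵀ + α_n I)⁻¹ r^n‖ = q_n‖r^n‖ where τ_n = ‖r^n‖/δ and q_n = max{q, 2ρ + (1+ρ)/τ_n}, and z^{n+1} = z^n + WCᵀ(CCᵀ + α_n I)⁻¹ r^n. Equivalently, every run of the iteration reaches a finite stopping index n_δ with ‖r^{n_δ}‖ ≤ τδ. -/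
/-!
Put `L = C Wᵀ`. Then `W Cᵀ = Lᵀ` and, because `WᵀW = I`, `C Cᵀ = L Lᵀ`, so each step is the
Levenberg–Marquardt update `z ↦ z + Lᵀ h` with `(L Lᵀ + α) h = r`. For the error `e = x - z`,
assumptions (i) and (ii) bound the linearisation defect `‖L e - r‖ ≤ ρ‖r‖ + (1 + 2ρ)δ`, while
expanding the square gives `‖e‖² - ‖e - Lᵀh‖² ≥ 2‖h‖(α‖h‖ - ‖L e - r‖)`. The choice of `q_n`
makes `α‖h‖ - ‖L e - r‖ ≥ ρ(‖r‖ - δ)`, and `‖r‖ ≤ (‖L‖² + α)‖h‖` bounds `‖h‖` from below, so as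
long as `‖r‖ > τδ` the squared error drops by a fixed positive amount at every step, which cannot
go on forever.
-/

open Matrix Filter

open scoped InnerProduct RealInnerProductSpace

section LevenbergMarquardt

variable {E F : Type*} [NormedAddCommGroup E] [InnerProductSpace ℝ E] [CompleteSpace E]
  [NormedAddCommGroup F] [InnerProductSpace ℝ F] [CompleteSpace F]
  (L : E →L[ℝ] F) {e : E} {h r : F} {α η : ℝ}

theorem sq_norm_sub_adjoint_le (hr : L ((L†) h) + α • h = r) (he : ‖L e - r‖ ≤ η) :
    ‖e - (L†) h‖ ^ 2 ≤ ‖e‖ ^ 2 - 2 * ‖h‖ * (α * ‖h‖ - η) := by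
  have hnorm_sq : ‖(L†) h‖ ^ 2 = ⟪r, h⟫ - α * ‖h‖ ^ 2 := by
    rw [← real_inner_self_eq_norm_sq, ContinuousLinearMap.adjoint_inner_left, ← hr,
      inner_add_left, real_inner_smul_left, real_inner_self_eq_norm_sq, real_inner_comm]
    ring
  have hcross : ⟪r, h⟫ - η * ‖h‖ ≤ ⟪e, (L†) h⟫ := by
    have hle := neg_le_of_abs_le (abs_real_inner_le_norm (L e - r) h)
    rw [inner_sub_left] at hle
    rw [ContinuousLinearMap.adjoint_inner_right]
    linarith [mul_le_mul_of_nonneg_right he (norm_nonneg h)]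
  rw [norm_sub_sq_real]
  linarith [sq_nonneg ‖(L†) h‖]

theorem norm_le_of_apply_adjoint_add (hα : 0 ≤ α) (hr : L ((L†) h) + α • h = r) :
    ‖r‖ ≤ (‖L‖ ^ 2 + α) * ‖h‖ := by
  have hLL : ‖L ((L†) h)‖ ≤ ‖L‖ ^ 2 * ‖h‖ := calc
    ‖L ((L†) h)‖ ≤ ‖L‖ * (‖L†‖ * ‖h‖) := L.le_opNorm_of_le (L†.le_opNorm h)
    _ = ‖L‖ ^ 2 * ‖h‖ := by rw [LinearIsometryEquiv.norm_map]; ring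
  calc ‖r‖ ≤ ‖L ((L†) h)‖ + ‖α • h‖ := hr ▸ norm_add_le _ _
    _ ≤ (‖L‖ ^ 2 + α) * ‖h‖ := by
      rw [norm_smul, Real.norm_of_nonneg hα]; linarith

theorem mul_sq_norm_sub_adjoint_le {θ : ℝ} (hα : 0 ≤ α) (hr : L ((L†) h) + α • h = r)
    (hθ : α * ‖h‖ = θ * ‖r‖) (he : ‖L e - r‖ ≤ η) (hη : η ≤ θ * ‖r‖) :
    2 * ((1 - θ) * ‖r‖) * (θ * ‖r‖ - η) ≤ ‖L‖ ^ 2 * (‖e‖ ^ 2 - ‖e - (L†) h‖ ^ 2) := by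
  have hlower : (1 - θ) * ‖r‖ ≤ ‖L‖ ^ 2 * ‖h‖ := by
    linarith [norm_le_of_apply_adjoint_add L hα hr]
  have hdec := sq_norm_sub_adjoint_le L hr he
  calc 2 * ((1 - θ) * ‖r‖) * (θ * ‖r‖ - η) ≤ 2 * (‖L‖ ^ 2 * ‖h‖) * (θ * ‖r‖ - η) := by
        gcongr
    _ = ‖L‖ ^ 2 * (2 * ‖h‖ * (α * ‖h‖ - η)) := by rw [hθ]; ring
    _ ≤ ‖L‖ ^ 2 * (‖e‖ ^ 2 - ‖e - (L†) h‖ ^ 2) := by gcongr; linarith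

end LevenbergMarquardt

theorem not_forall_le_mul_sub {a : ℕ → ℝ} {K κ : ℝ} (ha : ∀ n, 0 ≤ a n) (hK : 0 ≤ K)
    (hκ : 0 < κ) : ¬ ∀ n, κ ≤ K * (a n - a (n + 1)) := by
  intro h
  have hsum : ∀ n : ℕ, n * κ ≤ K * (a 0 - a n) := by
    intro n
    induction n with
    | zero => simp
    | succ n ih => push_cast; linarith [h n]
  obtain ⟨n, hn⟩ := exists_nat_gt (K * a 0 / κ)
  rw [div_lt_iff₀ hκ] at hn
  nlinarith [hsum n, mul_nonneg hK (ha n)]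

section MatrixIteration

variable {m n k : ℕ}

theorem mulVecE_mul (A : Matrix (Fin m) (Fin n) ℝ) (B : Matrix (Fin n) (Fin k) ℝ)
    (v : EuclideanSpace ℝ (Fin k)) : mulVecE (A * B) v = mulVecE A (mulVecE B v) :=
  congrArg (WithLp.toLp 2) (mulVec_mulVec v A B).symm

theorem mulVecE_sub (A : Matrix (Fin m) (Fin n) ℝ) (u v : EuclideanSpace ℝ (Fin n)) :
    mulVecE A (u - v) = mulVecE A u - mulVecE A v :=
  congrArg (WithLp.toLp 2) (mulVec_sub A u v)

theorem sub_mulVecE (A B : Matrix (Fin m) (Fin n) ℝ) (v : EuclideanSpace ℝ (Fin n)) :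
    mulVecE (A - B) v = mulVecE A v - mulVecE B v :=
  congrArg (WithLp.toLp 2) (sub_mulVec A B v)

theorem mulVecE_mul_nonsing_inv {M : Matrix (Fin n) (Fin n) ℝ} (hM : IsUnit M.det)
    (v : EuclideanSpace ℝ (Fin n)) : mulVecE M (mulVecE M⁻¹ v) = v := by
  rw [← mulVecE_mul, mul_nonsing_inv M hM]
  exact congrArg (WithLp.toLp 2) (one_mulVec _)

theorem mulVecE_add_smul_one (A : Matrix (Fin n) (Fin n) ℝ) (c : ℝ)
    (v : EuclideanSpace ℝ (Fin n)) :
    mulVecE (A + c • 1) v = mulVecE A v + c • v :=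
  congrArg (WithLp.toLp 2) (by rw [add_mulVec, smul_mulVec, one_mulVec]; rfl)

theorem adjoint_toEuclideanLin_apply (A : Matrix (Fin m) (Fin n) ℝ)
    (v : EuclideanSpace ℝ (Fin m)) :
    ((toEuclideanLin A).toContinuousLinearMap†) v = mulVecE Aᵀ v := by
  rw [← LinearMap.adjoint_toContinuousLinearMap, ← toEuclideanLin_conjTranspose_eq_adjoint,
    conjTranspose_eq_transpose_of_trivial]
  rfl

theorem mul_sq_norm_sub_iterate_le {s : ℕ} (C : Matrix (Fin m) (Fin n) ℝ)
    (W : Matrix (Fin s) (Fin n) ℝ) (hW : Wᵀ * W = 1) {α θ η : ℝ} (hα : 0 < α)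
    (e : EuclideanSpace ℝ (Fin s)) (r : EuclideanSpace ℝ (Fin m))
    (hθ : α * ‖mulVecE (C * Cᵀ + α • 1)⁻¹ r‖ = θ * ‖r‖)
    (he : ‖mulVecE (C * Wᵀ) e - r‖ ≤ η) (hη : η ≤ θ * ‖r‖) :
    2 * ((1 - θ) * ‖r‖) * (θ * ‖r‖ - η) ≤ ‖(toEuclideanLin (C * Wᵀ)).toContinuousLinearMap‖ ^ 2 *
      (‖e‖ ^ 2 - ‖e - mulVecE (W * Cᵀ * (C * Cᵀ + α • 1)⁻¹) r‖ ^ 2) := by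
  set L := (toEuclideanLin (C * Wᵀ)).toContinuousLinearMap
  set M : Matrix (Fin m) (Fin m) ℝ := C * Cᵀ + α • 1
  set h := mulVecE M⁻¹ r
  have hM : M.PosDef := by
    refine PosDef.posSemidef_add (by simpa using posSemidef_conjTranspose_mul_self Cᵀ) ?_
    simpa [smul_one_eq_diagonal] using PosDef.diagonal fun _ => hα
  have hadj : (L†) h = mulVecE (W * Cᵀ * M⁻¹) r := by
    rw [adjoint_toEuclideanLin_apply, transpose_mul, transpose_transpose, mulVecE_mul _ M⁻¹]
  have hLL : L ((L†) h) + α • h = r := by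
    have hCC : C * Wᵀ * (W * Cᵀ) = C * Cᵀ := by
      rw [Matrix.mul_assoc, ← Matrix.mul_assoc Wᵀ, hW, Matrix.one_mul]
    change mulVecE (C * Wᵀ) ((L†) h) + α • h = r
    rw [adjoint_toEuclideanLin_apply, transpose_mul, transpose_transpose, ← mulVecE_mul, hCC,
      ← mulVecE_add_smul_one, mulVecE_mul_nonsing_inv ((isUnit_iff_isUnit_det M).mp hM.isUnit)]
  rw [← hadj]
  exact mul_sq_norm_sub_adjoint_le L hα.le hLL hθ he hη

theorem norm_mulVecE_sub_residual_le {s : ℕ} {A C : Matrix (Fin m) (Fin n) ℝ}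
    {W : Matrix (Fin s) (Fin n) ℝ} {ρ δ : ℝ} (hρ : 0 ≤ ρ)
    (hi : ∀ v, ‖mulVecE (C - A) v‖ ≤ ρ * ‖mulVecE A v‖) {x z u : EuclideanSpace ℝ (Fin s)}
    {g : EuclideanSpace ℝ (Fin m)} (hx : ‖g - mulVecE (A * Wᵀ) x‖ ≤ δ)
    (hzu : ‖mulVecE (C * Wᵀ) (z - u)‖ ≤ ρ * δ) :
    ‖mulVecE (C * Wᵀ) (x - z) - (g - mulVecE (A * Wᵀ) u)‖ ≤
      ρ * ‖g - mulVecE (A * Wᵀ) u‖ + (1 + 2 * ρ) * δ := by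
  set r := g - mulVecE (A * Wᵀ) u
  set d := g - mulVecE (A * Wᵀ) x
  set v := mulVecE Wᵀ (x - u)
  have hAv : mulVecE A v = r - d := by
    rw [← mulVecE_mul, mulVecE_sub]
    exact (sub_sub_sub_cancel_left _ _ _).symm
  have hsplit :
      mulVecE (C * Wᵀ) (x - z) - r = mulVecE (C - A) v - d - mulVecE (C * Wᵀ) (z - u) := by
    rw [show x - z = (x - u) - (z - u) by abel, mulVecE_sub, mulVecE_mul C, sub_mulVecE, hAv]
    abel
  calc ‖mulVecE (C * Wᵀ) (x - z) - r‖
      ≤ ‖mulVecE (C - A) v‖ + ‖d‖ + ‖mulVecE (C * Wᵀ) (z - u)‖ :=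
        hsplit ▸ norm_sub_le_of_le (norm_sub_le _ _) le_rfl
    _ ≤ ρ * (‖r‖ + δ) + δ + ρ * δ := by
        gcongr
        calc ‖mulVecE (C - A) v‖ ≤ ρ * ‖r - d‖ := hAv ▸ hi v
          _ ≤ ρ * (‖r‖ + δ) := by gcongr; exact norm_sub_le_of_le le_rfl hx
    _ = ρ * ‖r‖ + (1 + 2 * ρ) * δ := by ring

end MatrixIteration

theorem two_mul_add_div_lt_one {ρ : ℝ} (hρ0 : 0 < ρ) (hρ1 : ρ < 1 / 2) :
    2 * ρ + (1 + ρ) / ((1 + 2 * ρ) / (1 - 2 * ρ)) < 1 := by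
  have h : (1 + ρ) * (1 - 2 * ρ) / (1 + 2 * ρ) < 1 - 2 * ρ := by
    rw [div_lt_iff₀ (by linarith)]
    nlinarith
  rw [div_div_eq_mul_div]
  linarith

theorem mul_sub_one_mul_le_max_mul_sub (q : ℝ) {ρ δ τ R : ℝ} (hρ : 0 ≤ ρ) (hδ : 0 < δ)
    (hτ : 0 < τ) (hR : τ * δ ≤ R) :
    ρ * ((τ - 1) * δ) ≤ max q (2 * ρ + (1 + ρ) / (R / δ)) * R - (ρ * R + (1 + 2 * ρ) * δ) := by
  have hR0 : 0 < R := (mul_pos hτ hδ).trans_le hR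
  have hθR : 2 * ρ * R + (1 + ρ) * δ ≤ max q (2 * ρ + (1 + ρ) / (R / δ)) * R := calc
    2 * ρ * R + (1 + ρ) * δ = (2 * ρ + (1 + ρ) / (R / δ)) * R := by field_simp
    _ ≤ max q (2 * ρ + (1 + ρ) / (R / δ)) * R := by gcongr; exact le_max_right _ _
  nlinarith [mul_le_mul_of_nonneg_left hR hρ]

theorem stmt14_general {N s : ℕ}
    (A C : Matrix (Fin N) (Fin N) ℝ) (W : Matrix (Fin s) (Fin N) ℝ)
    (hW : Wᵀ * W = (1 : Matrix (Fin N) (Fin N) ℝ))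
    (ρ μ δ : ℝ) (hρ0 : 0 < ρ) (hρ1 : ρ < 1 / 2) (hδ : 0 < δ)
    (hi : ∀ v : EuclideanSpace ℝ (Fin N), ‖mulVecE (C - A) v‖ ≤ ρ * ‖mulVecE A v‖)
    (hii : ∀ u : EuclideanSpace ℝ (Fin s), ‖mulVecE (C * Wᵀ) (u - soft μ u)‖ ≤ ρ * δ)
    (x : EuclideanSpace ℝ (Fin s)) (gδ : EuclideanSpace ℝ (Fin N))
    (hgδ : ‖gδ - mulVecE (A * Wᵀ) x‖ ≤ δ)
    (q : ℝ) (hq1 : q < 1)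
    (z0 : EuclideanSpace ℝ (Fin s)) :
    ¬ ∃ (z : ℕ → EuclideanSpace ℝ (Fin s)) (r : ℕ → EuclideanSpace ℝ (Fin N)) (αs : ℕ → ℝ),
      z 0 = z0 ∧
      ∀ n : ℕ,
        r n = gδ - mulVecE (A * Wᵀ) (soft μ (z n)) ∧
        ‖r n‖ > ((1 + 2 * ρ) / (1 - 2 * ρ)) * δ ∧
        0 < αs n ∧
        αs n * ‖mulVecE (C * Cᵀ + αs n • (1 : Matrix (Fin N) (Fin N) ℝ))⁻¹ (r n)‖ =
          max q (2 * ρ + (1 + ρ) / (‖r n‖ / δ)) * ‖r n‖ ∧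
        z (n + 1) =
          z n + mulVecE (W * Cᵀ * (C * Cᵀ + αs n • (1 : Matrix (Fin N) (Fin N) ℝ))⁻¹) (r n) := by
  rintro ⟨z, r, α, -, hrun⟩
  set τ := (1 + 2 * ρ) / (1 - 2 * ρ)
  set qmax := max q (2 * ρ + (1 + ρ) / τ)
  have hτ : 1 < τ := (one_lt_div (by linarith)).mpr (by linarith)
  have hqmax : qmax < 1 := max_lt hq1 (two_mul_add_div_lt_one hρ0 hρ1)
  have hdefect_pos : 0 < (1 - qmax) * (τ * δ) := mul_pos (sub_pos.mpr hqmax) (by positivity)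
  have hgap_pos : 0 < ρ * ((τ - 1) * δ) := mul_pos hρ0 (mul_pos (sub_pos.mpr hτ) hδ)
  refine not_forall_le_mul_sub (a := fun n => ‖x - z n‖ ^ 2) (fun n => sq_nonneg _)
    (sq_nonneg ‖(toEuclideanLin (C * Wᵀ)).toContinuousLinearMap‖)
    (mul_pos (mul_pos two_pos hdefect_pos) hgap_pos) fun n => ?_
  obtain ⟨hr, hrτ, hα, hθ, hz⟩ := hrun n
  set θ := max q (2 * ρ + (1 + ρ) / (‖r n‖ / δ))
  have hgap : ρ * ((τ - 1) * δ) ≤ θ * ‖r n‖ - (ρ * ‖r n‖ + (1 + 2 * ρ) * δ) :=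
    mul_sub_one_mul_le_max_mul_sub q hρ0.le hδ (by linarith) hrτ.le
  have hdefect : (1 - qmax) * (τ * δ) ≤ (1 - θ) * ‖r n‖ := by
    have hθmax : θ ≤ qmax := max_le_max le_rfl (by gcongr; exact (le_div_iff₀ hδ).mpr hrτ.le)
    exact mul_le_mul (by linarith) hrτ.le (by positivity) (by linarith)
  have hres := norm_mulVecE_sub_residual_le hρ0.le hi hgδ (hii (z n))
  rw [← hr] at hres
  calc 2 * ((1 - qmax) * (τ * δ)) * (ρ * ((τ - 1) * δ))
      ≤ 2 * ((1 - θ) * ‖r n‖) * (θ * ‖r n‖ - (ρ * ‖r n‖ + (1 + 2 * ρ) * δ)) := by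
        gcongr; linarith
    _ ≤ _ := by
        rw [hz, sub_add_eq_sub_sub x]
        exact mul_sq_norm_sub_iterate_le C W hW hα _ _ hθ hres (by linarith)

/-- Finite termination of Algorithm 4--NS: there is no infinite run of the nonstationary
preconditioned iteration along which the discrepancy principle is never satisfied
(i.e. with `‖r^n‖ > τδ` for every `n`). -/
theorem stmt14 {N s : ℕ} (hN : 0 < N) (hs : 0 < s) (hNs : N ≤ s)
    (A C : Matrix (Fin N) (Fin N) ℝ) (hC : C ≠ 0) (W : Matrix (Fin s) (Fin N) ℝ)
    (hW : Wᵀ * W = (1 : Matrix (Fin N) (Fin N) ℝ))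
    (ρ μ δ : ℝ) (hρ0 : 0 < ρ) (hρ1 : ρ < 1 / 2) (hμ : 0 ≤ μ) (hδ : 0 < δ)
    (hi : ∀ v : EuclideanSpace ℝ (Fin N), ‖mulVecE (C - A) v‖ ≤ ρ * ‖mulVecE A v‖)
    (hii : ∀ u : EuclideanSpace ℝ (Fin s), ‖mulVecE (C * Wᵀ) (u - soft μ u)‖ ≤ ρ * δ)
    (x : EuclideanSpace ℝ (Fin s)) (gδ : EuclideanSpace ℝ (Fin N))
    (hgδ : ‖gδ - mulVecE (A * Wᵀ) x‖ ≤ δ)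
    (q : ℝ) (hq0 : 2 * ρ < q) (hq1 : q < 1)
    (z0 : EuclideanSpace ℝ (Fin s)) :
    ¬ ∃ (z : ℕ → EuclideanSpace ℝ (Fin s)) (r : ℕ → EuclideanSpace ℝ (Fin N)) (αs : ℕ → ℝ),
      z 0 = z0 ∧
      ∀ n : ℕ,
        r n = gδ - mulVecE (A * Wᵀ) (soft μ (z n)) ∧
        ‖r n‖ > ((1 + 2 * ρ) / (1 - 2 * ρ)) * δ ∧
        0 < αs n ∧
        αs n * ‖mulVecE (C * Cᵀ + αs n • (1 : Matrix (Fin N) (Fin N) ℝ))⁻¹ (r n)‖ =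
          max q (2 * ρ + (1 + ρ) / (‖r n‖ / δ)) * ‖r n‖ ∧
        z (n + 1) =
          z n + mulVecE (W * Cᵀ * (C * Cᵀ + αs n • (1 : Matrix (Fin N) (Fin N) ℝ))⁻¹) (r n) :=
  stmt14_general A C W hW ρ μ δ hρ0 hρ1 hδ hi hii x gδ hgδ q hq1 z0
end
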